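/- arXiv:2004.01412 — 2 statements merged into one kernel-verified Lean document; each statement's English description precedes it below -/
import Mathlib

section
/- For every integer n ≥ 22, it holds that 2·csc(π/(n−4)) − 2·cot(π/(n−6)) < 2√3 − 2. -/
open Real

/-!
With `x = π / (n - 4)` and `y = π / (n - 6)` the principal parts cancel exactly:
`1 / x - 1 / y = 2 / π`. The Laurent expansions `1 / sin x = 1 / x + x / 6 + O(x³)` and
`cot y = 1 / y - y / 3 - O(y³)` then reduce the claim to
`2 / π + x / 6 + y / 3 + O(y³) < √3 - 1`. Both angles decrease in `n`, so the worst case is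
`n = 22`, where the margin is about `6 · 10⁻⁴`; explicit Taylor bounds with cubic error terms
`x³ / 30` and `y³ / 30` fit inside it.
-/

namespace Real

lemma sin_le_sub_cube_add_pow_five {x : ℝ} (hx₀ : 0 ≤ x) (hx₁ : x ≤ 1) :
    sin x ≤ x - x ^ 3 / 6 + x ^ 5 / 100 := by
  have h := sin_bound (abs_le.2 ⟨by linarith, hx₁⟩)
  rw [abs_of_nonneg hx₀] at h
  linarith [(abs_le.1 h).2]

lemma one_sub_sq_div_two_add_pow_four_div_sub_pow_six_div_le_cos {x : ℝ} (hx₀ : 0 ≤ x)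
    (hx₁ : x ≤ 1) : 1 - x ^ 2 / 2 + x ^ 4 / 24 - x ^ 6 / 600 ≤ cos x := by
  set s := x / 2 - (x / 2) ^ 3 / 6 + (x / 2) ^ 5 / 100
  have hsin₀ : 0 ≤ sin (x / 2) :=
    sin_nonneg_of_nonneg_of_le_pi (by linarith) (by linarith [pi_gt_three])
  have hsq : sin (x / 2) ^ 2 ≤ s ^ 2 :=
    pow_le_pow_left₀ hsin₀ (sin_le_sub_cube_add_pow_five (by linarith) (by linarith)) 2
  have hcos : cos x = 1 - 2 * sin (x / 2) ^ 2 := by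
    rw [← cos_two_mul_eq_one_sub, mul_div_cancel₀ x two_ne_zero]
  have hs : x ^ 2 / 2 - x ^ 4 / 24 + x ^ 6 / 600 - 2 * s ^ 2 =
      x ^ 6 / 5760 + x ^ 8 / 38400 - x ^ 10 / 5120000 := by
    ring
  have h10 : x ^ 10 ≤ x ^ 6 := pow_le_pow_of_le_one hx₀ hx₁ (by norm_num)
  linarith [pow_nonneg hx₀ 6, pow_nonneg hx₀ 8]

lemma one_div_sin_le {x : ℝ} (hx₀ : 0 < x) (hx₁ : x ≤ 1) :
    1 / sin x ≤ 1 / x + x / 6 + x ^ 3 / 30 := by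
  have hsq : x ^ 2 ≤ 1 := pow_le_one₀ hx₀.le hx₁
  have hlow : x - x ^ 3 / 6 ≤ sin x := sin_ge_sub_cube hx₀.le
  have hlow₀ : 0 < x - x ^ 3 / 6 := by nlinarith
  have hprod : (1 / x + x / 6 + x ^ 3 / 30) * (x - x ^ 3 / 6) = 1 + x ^ 4 * (1 - x ^ 2) / 180 := by
    field_simp
    ring
  rw [div_le_iff₀ (hlow₀.trans_le hlow)]
  calc 1 ≤ 1 + x ^ 4 * (1 - x ^ 2) / 180 := by
        have := mul_nonneg (pow_nonneg hx₀.le 4) (sub_nonneg.2 hsq)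
        linarith
    _ = (1 / x + x / 6 + x ^ 3 / 30) * (x - x ^ 3 / 6) := hprod.symm
    _ ≤ (1 / x + x / 6 + x ^ 3 / 30) * sin x := by gcongr

lemma inv_sub_le_cot {x : ℝ} (hx₀ : 0 < x) (hx₁ : x ≤ 1) :
    1 / x - x / 3 - x ^ 3 / 30 ≤ cot x := by
  have hsin₀ : 0 < sin x := sin_pos_of_pos_of_lt_pi hx₀ (by linarith [pi_gt_three])
  have hsq : x ^ 2 ≤ 1 := pow_le_one₀ hx₀.le hx₁
  have hcoef : 0 ≤ 1 / x - x / 3 - x ^ 3 / 30 := by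
    have : 1 / x - x / 3 - x ^ 3 / 30 = (1 - x ^ 2 / 3 - x ^ 4 / 30) / x := by
      field_simp
    rw [this]
    have : x ^ 4 ≤ 1 := pow_le_one₀ hx₀.le hx₁
    exact div_nonneg (by linarith) hx₀.le
  have hprod : (1 / x - x / 3 - x ^ 3 / 30) * (x - x ^ 3 / 6 + x ^ 5 / 100) =
      1 - x ^ 2 / 2 + x ^ 4 / 24 - x ^ 6 / 600 -
        ((17 - 7 * x ^ 2) * x ^ 4 / 1800 + x ^ 8 / 3000) := by
    field_simp
    ring
  rw [cot_eq_cos_div_sin, le_div_iff₀ hsin₀]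
  calc (1 / x - x / 3 - x ^ 3 / 30) * sin x
      ≤ (1 / x - x / 3 - x ^ 3 / 30) * (x - x ^ 3 / 6 + x ^ 5 / 100) :=
        mul_le_mul_of_nonneg_left (sin_le_sub_cube_add_pow_five hx₀.le hx₁) hcoef
    _ ≤ 1 - x ^ 2 / 2 + x ^ 4 / 24 - x ^ 6 / 600 := by
        rw [hprod]
        have := mul_nonneg (by linarith : (0 : ℝ) ≤ 17 - 7 * x ^ 2) (pow_nonneg hx₀.le 4)
        linarith [pow_nonneg hx₀.le 8]
    _ ≤ cos x := one_sub_sq_div_two_add_pow_four_div_sub_pow_six_div_le_cos hx₀.le hx₁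

end Real

lemma two_div_pi_add_lt_sqrt_three_sub_one :
    2 / π + π / 18 / 6 + π / 16 / 3 + ((π / 18) ^ 3 + (π / 16) ^ 3) / 30 < √3 - 1 := by
  have hπ₀ := pi_gt_d4
  have hπ₁ := pi_lt_d4
  have hinv : 2 / π < 0.63665 := by
    rw [div_lt_iff₀ pi_pos]
    linarith
  have hcube : π ^ 3 < 3.1416 ^ 3 := pow_lt_pow_left₀ hπ₁ pi_pos.le (by norm_num)
  have hsqrt : (1.732 : ℝ) < √3 := by
    rw [lt_sqrt (by norm_num)]
    norm_num
  rw [div_pow, div_pow]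
  linarith

theorem stmt10 (n : ℤ) (hn : 22 ≤ n) :
    2 * (1 / Real.sin (π / ((n : ℝ) - 4))) - 2 * Real.cot (π / ((n : ℝ) - 6)) <
      2 * Real.sqrt 3 - 2 := by
  have hn' : (22 : ℝ) ≤ n := by exact_mod_cast hn
  set x := π / ((n : ℝ) - 4) with hx
  set y := π / ((n : ℝ) - 6) with hy
  have hx₀ : 0 < x := div_pos pi_pos (by linarith)
  have hy₀ : 0 < y := div_pos pi_pos (by linarith)
  have hx₁ : x ≤ π / 18 := div_le_div_of_nonneg_left pi_pos.le (by norm_num) (by linarith)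
  have hy₁ : y ≤ π / 16 := div_le_div_of_nonneg_left pi_pos.le (by norm_num) (by linarith)
  have hxy : 1 / x - 1 / y = 2 / π := by
    rw [hx, hy]
    field_simp
    ring
  have hπ := pi_lt_d2
  calc 2 * (1 / sin x) - 2 * cot y
        ≤ 2 * ((1 / x - 1 / y) + x / 6 + y / 3 + (x ^ 3 + y ^ 3) / 30) := by
        linarith [one_div_sin_le hx₀ (by linarith), inv_sub_le_cot hy₀ (by linarith)]
    _ ≤ 2 * (2 / π + π / 18 / 6 + π / 16 / 3 + ((π / 18) ^ 3 + (π / 16) ^ 3) / 30) := by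
        rw [hxy]
        gcongr
    _ < 2 * √3 - 2 := by linarith [two_div_pi_add_lt_sqrt_three_sub_one]
end

section
/- Let n > 4 be an even integer. For even integers m with 2 ≤ m ≤ n−2, define F(m) = 2·csc(π/m) + 2·cot(π/(n−m)). Then F is strictly decreasing: for even m₁ < m₂ in [2, n−2], F(m₁) > F(m₂). -/
/-!
Up to the constant `2 n / π`, `F(x)` is
`2 (csc (π / x) - x / π) + 2 (cot (π / (n - x)) - (n - x) / π)`.
In the variable `u = π / x` the first bracket is `csc u - 1 / u`, whose derivative
`1 / u ^ 2 - cos u / sin u ^ 2` is positive because `u ^ 2 cos u < sin u ^ 2` on `(0, π]`;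
the second is `cot v - 1 / v` with `v = π / (n - x)`, whose derivative
`1 / v ^ 2 - 1 / sin v ^ 2` is negative because `sin v < v`.
So both brackets strictly decrease in `x`.
-/

open Real Set

theorem hasDerivAt_cot {v : ℝ} (hv : sin v ≠ 0) : HasDerivAt cot (-1 / sin v ^ 2) v := by
  have hcot : cot = fun t => cos t / sin t := funext fun t => cot_eq_cos_div_sin t
  rw [hcot]
  refine ((hasDerivAt_cos v).div (hasDerivAt_sin v) hv).congr_deriv ?_
  linear_combination (-1 / sin v ^ 2) * sin_sq_add_cos_sq v

theorem sq_mul_cos_lt_sin_sq {u : ℝ} (hu₀ : 0 < u) (hu : u ≤ π) :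
    u ^ 2 * cos u < sin u ^ 2 := by
  let g : ℝ → ℝ := fun t => sin t ^ 2 - t ^ 2 * cos t
  have hg' : ∀ t, HasDerivAt g (2 * cos t * (sin t - t) + t ^ 2 * sin t) t := fun t => by
    refine (((hasDerivAt_sin t).pow 2).sub
      ((hasDerivAt_pow 2 t).mul (hasDerivAt_cos t))).congr_deriv ?_
    push_cast
    ring
  have hg'_pos : ∀ t ∈ interior (Icc 0 π), 0 < deriv g t := by
    rw [interior_Icc]
    rintro t ⟨ht₀, htπ⟩
    rw [(hg' t).deriv]
    have hsin : 0 < sin t := sin_pos_of_pos_of_lt_pi ht₀ htπ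
    have hsin_lt : sin t < t := sin_lt ht₀
    rcases le_or_gt (cos t) 0 with hcos | hcos
    · nlinarith [mul_nonneg (neg_nonneg.2 hcos) (sub_nonneg.2 hsin_lt.le), sq_pos_of_pos ht₀]
    have ht : t < π / 2 := by
      by_contra! h
      exact hcos.not_ge (cos_nonpos_of_pi_div_two_le_of_le h (by linarith))
    -- here `t - sin t < t ^ 3 / 6` and `t cos t < sin t` give
    -- `g' t > t ^ 2 (sin t - t cos t / 3) > 0`
    have htan : t * cos t < sin t := by
      have := lt_tan ht₀ ht
      rwa [tan_eq_sin_div_cos, lt_div_iff₀ hcos] at this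
    have hcube := sin_gt_sub_cube ht₀
    nlinarith [mul_lt_mul_of_pos_left htan (pow_pos ht₀ 2), mul_pos hcos (pow_pos ht₀ 3),
      mul_lt_mul_of_pos_left hcube hcos]
  have hg_mono : StrictMonoOn g (Icc 0 π) :=
    strictMonoOn_of_deriv_pos (convex_Icc 0 π) (fun t _ => (hg' t).continuousAt.continuousWithinAt)
      hg'_pos
  simpa [g] using hg_mono ⟨le_rfl, pi_pos.le⟩ ⟨hu₀.le, hu⟩ hu₀

theorem strictMonoOn_one_div_sin_sub_one_div :
    StrictMonoOn (fun u => 1 / sin u - 1 / u) (Ioo 0 π) := by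
  refine strictMonoOn_of_deriv_pos (convex_Ioo 0 π) ?_ ?_
  · intro u ⟨hu₀, huπ⟩
    have hsin : sin u ≠ 0 := (sin_pos_of_pos_of_lt_pi hu₀ huπ).ne'
    exact ((continuousAt_const.div continuous_sin.continuousAt hsin).sub
      (continuousAt_const.div continuousAt_id hu₀.ne')).continuousWithinAt
  · rw [interior_Ioo]
    rintro u ⟨hu₀, huπ⟩
    have hsin : 0 < sin u := sin_pos_of_pos_of_lt_pi hu₀ huπ
    have hderiv : HasDerivAt (fun u => 1 / sin u - 1 / u) (1 / u ^ 2 - cos u / sin u ^ 2) u := by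
      simp only [one_div]
      refine ((hasDerivAt_sin u).inv hsin.ne').sub (hasDerivAt_inv hu₀.ne') |>.congr_deriv ?_
      ring
    have : cos u / sin u ^ 2 < 1 / u ^ 2 := by
      rw [div_lt_div_iff₀ (by positivity) (by positivity)]
      simpa [mul_comm] using sq_mul_cos_lt_sin_sq hu₀ huπ.le
    rwa [hderiv.deriv, sub_pos]

theorem strictAntiOn_cot_sub_one_div : StrictAntiOn (fun v => cot v - 1 / v) (Ioo 0 π) := by
  refine strictAntiOn_of_deriv_neg (convex_Ioo 0 π) ?_ ?_
  · intro v ⟨hv₀, hvπ⟩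
    exact ((hasDerivAt_cot (sin_pos_of_pos_of_lt_pi hv₀ hvπ).ne').continuousAt.sub
      (continuousAt_const.div continuousAt_id hv₀.ne')).continuousWithinAt
  · rw [interior_Ioo]
    rintro v ⟨hv₀, hvπ⟩
    have hsin : 0 < sin v := sin_pos_of_pos_of_lt_pi hv₀ hvπ
    have hderiv : HasDerivAt (fun v => cot v - 1 / v) (1 / v ^ 2 - 1 / sin v ^ 2) v := by
      simp only [one_div]
      refine (hasDerivAt_cot hsin.ne').sub (hasDerivAt_inv hv₀.ne') |>.congr_deriv ?_
      ring
    have : 1 / v ^ 2 < 1 / sin v ^ 2 := one_div_lt_one_div_of_lt (by positivity)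
      (pow_lt_pow_left₀ (sin_lt hv₀) hsin.le two_ne_zero)
    rwa [hderiv.deriv, sub_neg]

theorem pi_div_mem_Ioo {x : ℝ} (hx : 1 < x) : π / x ∈ Ioo 0 π :=
  ⟨div_pos pi_pos (by linarith), div_lt_self pi_pos hx⟩

theorem strictAntiOn_one_div_sin_pi_div_sub_div_pi :
    StrictAntiOn (fun x => 1 / sin (π / x) - x / π) (Ioi 1) := by
  intro x₁ hx₁ x₂ hx₂ hlt
  have := strictMonoOn_one_div_sin_sub_one_div (pi_div_mem_Ioo hx₂) (pi_div_mem_Ioo hx₁)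
    (div_lt_div_of_pos_left pi_pos (by linarith [mem_Ioi.1 hx₁]) hlt)
  simpa only [one_div_div] using this

theorem strictMonoOn_cot_pi_div_sub_div_pi :
    StrictMonoOn (fun y => cot (π / y) - y / π) (Ioi 1) := by
  intro y₁ hy₁ y₂ hy₂ hlt
  have := strictAntiOn_cot_sub_one_div (pi_div_mem_Ioo hy₂) (pi_div_mem_Ioo hy₁)
    (div_lt_div_of_pos_left pi_pos (by linarith [mem_Ioi.1 hy₁]) hlt)
  simpa only [one_div_div] using this

theorem stmt13_general (n : ℤ)
    (m₁ m₂ : ℤ)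
    (h2 : 2 ≤ m₁) (hlt : m₁ < m₂) (hub : m₂ ≤ n - 2) :
    2 * (1 / Real.sin (π / (m₁ : ℝ))) + 2 * Real.cot (π / ((n : ℝ) - (m₁ : ℝ))) >
      2 * (1 / Real.sin (π / (m₂ : ℝ))) + 2 * Real.cot (π / ((n : ℝ) - (m₂ : ℝ))) := by
  have h2' : (2 : ℝ) ≤ m₁ := by exact_mod_cast h2
  have hlt' : (m₁ : ℝ) < m₂ := by exact_mod_cast hlt
  have hub' : (m₂ : ℝ) ≤ n - 2 := by exact_mod_cast hub
  have hcsc := strictAntiOn_one_div_sin_pi_div_sub_div_pi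
    (mem_Ioi.2 (by linarith : (1 : ℝ) < m₁)) (mem_Ioi.2 (by linarith : (1 : ℝ) < m₂)) hlt'
  have hcot := strictMonoOn_cot_pi_div_sub_div_pi
    (mem_Ioi.2 (by linarith : (1 : ℝ) < n - m₂))
    (mem_Ioi.2 (by linarith : (1 : ℝ) < n - m₁))
    (by linarith : (n : ℝ) - m₂ < n - m₁)
  simp only [sub_div] at hcsc hcot
  linarith

theorem stmt13 (n : ℤ) (hne : Even n) (hn : 4 < n)
    (m₁ m₂ : ℤ) (hm₁e : Even m₁) (hm₂e : Even m₂)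
    (h2 : 2 ≤ m₁) (hlt : m₁ < m₂) (hub : m₂ ≤ n - 2) :
    2 * (1 / Real.sin (π / (m₁ : ℝ))) + 2 * Real.cot (π / ((n : ℝ) - (m₁ : ℝ))) >
      2 * (1 / Real.sin (π / (m₂ : ℝ))) + 2 * Real.cot (π / ((n : ℝ) - (m₂ : ℝ))) :=
  stmt13_general n m₁ m₂ h2 hlt hub
end
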